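/- arXiv:0903.3152 — 4 statements merged into one kernel-verified Lean document; each statement's English description precedes it below -/
import Mathlib

section
/- For the deformed H1 polynomial Q(u,x,y,z;α,β) = (u−z)(x−y) − (α−β)(1−ε·x·y), the biquadratic h₃₄ := Q·∂_y∂_z Q − (∂_y Q)(∂_z Q) (derivatives with respect to the third and fourth arguments) factorizes as h₃₄ = (β−α)·(1 − ε·x²); in particular it is independent of y and z and factors into an antisymmetric function of (α,β) times a polynomial in u,x depending only on α. -/
/-!
`Q` is affine in `y` and in `z` separately with `∂_y ∂_z Q = 1`, so `h₃₄ = Q - Q_{,3} Q_{,4}`,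
and in this polynomial all terms involving `y` or `z` cancel.
-/

/-- The deformation of H1: Q(u,x,y,z;α,β) = (u−z)(x−y) − (α−β)(1−ε·x·y). -/
def QH1 (ε u x y z α β : ℝ) : ℝ := (u - z) * (x - y) - (α - β) * (1 - ε * x * y)

section

variable (ε u x y z α β : ℝ)

theorem hasDerivAt_QH1_y :
    HasDerivAt (fun y' => QH1 ε u x y' z α β) ((α - β) * ε * x - (u - z)) y := by
  have := (((hasDerivAt_id y).const_sub x).const_mul (u - z)).sub
    ((((hasDerivAt_id y).const_mul (ε * x)).const_sub 1).const_mul (α - β))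
  convert this using 1 <;> first | rfl | ring

theorem hasDerivAt_QH1_z :
    HasDerivAt (fun z' => QH1 ε u x y z' α β) (y - x) z := by
  have := (((hasDerivAt_id z).const_sub u).mul_const (x - y)).sub_const ((α - β) * (1 - ε * x * y))
  convert this using 1 <;> first | rfl | ring

theorem deriv_deriv_QH1_yz :
    deriv (fun z' => deriv (fun y' => QH1 ε u x y' z' α β) y) z = 1 := by
  simp only [(hasDerivAt_QH1_y ε u x y _ α β).deriv]
  simp

end

/-- The edge biquadratic h₃₄ = Q·Q_{,34} − Q_{,3}·Q_{,4} of deformed H1 factorizes as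
(β−α)(1−εx²); in particular it is independent of y, z. -/
theorem stmt2 (ε u x y z α β : ℝ) :
    QH1 ε u x y z α β *
        deriv (fun z' => deriv (fun y' => QH1 ε u x y' z' α β) y) z
      - deriv (fun y' => QH1 ε u x y' z α β) y *
        deriv (fun z' => QH1 ε u x y z' α β) z
      = (β - α) * (1 - ε * x ^ 2) := by
  rw [deriv_deriv_QH1_yz, (hasDerivAt_QH1_y ε u x y z α β).deriv,
    (hasDerivAt_QH1_z ε u x y z α β).deriv, QH1]
  ring
end

section
/- For the deformed H3 polynomial Q(u,x,y,z;α,β) = α(ux+yz) − β(uy+xz) + (α²−β²)(δ − ε·x·y/(αβ)), the edge biquadratic h₃₄ := Q·Q_{,34} − Q_{,3}Q_{,4} factorizes as h₃₄ = (α²−β²)·(u·x + δα − (ε/α)·x²) — i.e. as an antisymmetric function k(α,β)=α²−β² times a biquadratic f(u,x;α) independent of β. -/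
/-!
`Q` is affine in `y` and in `z`, with `Q_{,34} = α`, so `h₃₄ = α Q − Q_{,3} Q_{,4}` is an explicit
polynomial in the coupling `c = (α² − β²) ε / (α β)`. All `y`- and `z`-dependence cancels, leaving
`(α² − β²)(u x + δ α) − β c x²`, and `β c = (α² − β²) ε / α` once `β ≠ 0`.
-/

/-- The deformation of H3: Q(u,x,y,z;α,β) = α(ux+yz) − β(uy+xz) + (α²−β²)(δ − εxy/(αβ)). -/
noncomputable def QH3 (δ ε u x y z α β : ℝ) : ℝ :=
  α * (u * x + y * z) - β * (u * y + x * z) + (α ^ 2 - β ^ 2) * (δ - ε * x * y / (α * β))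

section

variable (δ ε u x y z α β : ℝ)

theorem hasDerivAt_QH3_y :
    HasDerivAt (fun y' => QH3 δ ε u x y' z α β)
      (α * z - β * u - (α ^ 2 - β ^ 2) * (ε * x / (α * β))) y :=
  ((((((hasDerivAt_id y).mul_const z).const_add (u * x)).const_mul α).sub
      ((((hasDerivAt_id y).const_mul u).add_const (x * z)).const_mul β)).add
    (((((hasDerivAt_id y).const_mul (ε * x)).div_const (α * β)).const_sub δ).const_mul
      (α ^ 2 - β ^ 2))).congr_deriv (by ring)

theorem hasDerivAt_QH3_z :
    HasDerivAt (fun z' => QH3 δ ε u x y z' α β) (α * y - β * x) z :=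
  (((((hasDerivAt_id z).const_mul y).const_add (u * x)).const_mul α).sub
      ((((hasDerivAt_id z).const_mul x).const_add (u * y)).const_mul β)
    |>.add_const ((α ^ 2 - β ^ 2) * (δ - ε * x * y / (α * β)))).congr_deriv (by ring)

theorem deriv_deriv_QH3_yz :
    deriv (fun z' => deriv (fun y' => QH3 δ ε u x y' z' α β) y) z = α := by
  simp only [fun z' => (hasDerivAt_QH3_y δ ε u x y z' α β).deriv]
  exact ((((hasDerivAt_id z).const_mul α).sub_const (β * u)).sub_const
    ((α ^ 2 - β ^ 2) * (ε * x / (α * β)))).deriv.trans (mul_one α)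

theorem QH3_mul_sub_mul :
    QH3 δ ε u x y z α β * α
        - (α * z - β * u - (α ^ 2 - β ^ 2) * (ε * x / (α * β))) * (α * y - β * x)
      = (α ^ 2 - β ^ 2) * (u * x + δ * α - β * (ε / (α * β)) * x ^ 2) := by
  unfold QH3
  ring

end

theorem stmt8_general (δ ε u x y z α β : ℝ) (hβ : β ≠ 0) :
    QH3 δ ε u x y z α β *
        deriv (fun z' => deriv (fun y' => QH3 δ ε u x y' z' α β) y) z
      - deriv (fun y' => QH3 δ ε u x y' z α β) y *
        deriv (fun z' => QH3 δ ε u x y z' α β) z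
      = (α ^ 2 - β ^ 2) * (u * x + δ * α - (ε / α) * x ^ 2) := by
  have hcoupling : β * (ε / (α * β)) = ε / α := by
    rw [mul_div_assoc', mul_comm β ε, mul_div_mul_right _ _ hβ]
  rw [deriv_deriv_QH3_yz, (hasDerivAt_QH3_y δ ε u x y z α β).deriv,
    (hasDerivAt_QH3_z δ ε u x y z α β).deriv, QH3_mul_sub_mul, hcoupling]

/-- The edge biquadratic h₃₄ = Q·Q_{,34} − Q_{,3}·Q_{,4} of deformed H3 factorizes as
(α²−β²)·(ux + δα − (ε/α)x²): an antisymmetric k(α,β)=α²−β² times a biquadratic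
f(u,x;α) independent of β. -/
theorem stmt8 (δ ε u x y z α β : ℝ) (hα : α ≠ 0) (hβ : β ≠ 0) :
    QH3 δ ε u x y z α β *
        deriv (fun z' => deriv (fun y' => QH3 δ ε u x y' z' α β) y) z
      - deriv (fun y' => QH3 δ ε u x y' z α β) y *
        deriv (fun z' => QH3 δ ε u x y z' α β) z
      = (α ^ 2 - β ^ 2) * (u * x + δ * α - (ε / α) * x ^ 2) :=
  stmt8_general δ ε u x y z α β hβ
end

section
/- For the deformed H2 polynomial Q(u,x,y,z;α,β) = (u−z)(x−y) + (β−α)(u+x+y+z) − α² + β² − ε(β−α)(2x+α+β)(2y+α+β) − ε(β−α)³, the edge biquadratic h₃₄ := Q·Q_{,34} − Q_{,3}Q_{,4} equals (β−α)·2·(u + x + α − 2ε(x+α)²), i.e. it factorizes as k(α,β)·f(u,x;α) with k antisymmetric in (α,β) and f independent of β. -/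
/-- The deformation of H2. -/
def QH2 (ε u x y z α β : ℝ) : ℝ :=
  (u - z) * (x - y) + (β - α) * (u + x + y + z) - α ^ 2 + β ^ 2
    - ε * (β - α) * (2 * x + α + β) * (2 * y + α + β) - ε * (β - α) ^ 3

/-! Deformed H2 is affine in each of `y` and `z`, with `yz`-coefficient `1`. For any
`f = a + b y + c z + d y z` one has `f f_{,yz} - f_{,y} f_{,z} = a d - b c`, independently of
`y, z`; the theorem is this identity for the coefficients of `Q`. -/

section Multiaffine

variable {𝕜 : Type*} [NontriviallyNormedField 𝕜]

theorem deriv_const_add_mul (a b t : 𝕜) : deriv (fun s => a + b * s) t = b := by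
  simp

theorem multiaffine_edge_biquadratic (a b c d y z : 𝕜) :
    (a + b * y + c * z + d * y * z) *
        deriv (fun z' => deriv (fun y' => a + b * y' + c * z' + d * y' * z') y) z
      - deriv (fun y' => a + b * y' + c * z + d * y' * z) y *
        deriv (fun z' => a + b * y + c * z' + d * y * z') z
      = a * d - b * c := by
  have affine_in_y (z' : 𝕜) : (fun y' => a + b * y' + c * z' + d * y' * z')
      = fun y' => (a + c * z') + (b + d * z') * y' := by
    funext y'; ring
  have affine_in_z (y' : 𝕜) : (fun z' => a + b * y' + c * z' + d * y' * z')
      = fun z' => (a + b * y') + (c + d * y') * z' := by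
    funext z'; ring
  simp only [affine_in_y, affine_in_z, deriv_const_add_mul]
  ring

end Multiaffine

/-- The edge biquadratic h₃₄ = Q·Q_{,34} − Q_{,3}·Q_{,4} of deformed H2 equals
(β−α)·2·(u + x + α − 2ε(x+α)²): an antisymmetric k(α,β)=β−α times f(u,x;α). -/
theorem stmt11 (ε u x y z α β : ℝ) :
    QH2 ε u x y z α β *
        deriv (fun z' => deriv (fun y' => QH2 ε u x y' z' α β) y) z
      - deriv (fun y' => QH2 ε u x y' z α β) y *
        deriv (fun z' => QH2 ε u x y z' α β) z
      = (β - α) * (2 * (u + x + α - 2 * ε * (x + α) ^ 2)) := by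
  obtain ⟨a, ha⟩ : ∃ a, a = QH2 ε u x 0 0 α β := ⟨_, rfl⟩
  have hQ (y' z' : ℝ) : QH2 ε u x y' z' α β
      = a + (-u + (β - α) - 2 * ε * (β - α) * (2 * x + α + β)) * y'
        + (-x + (β - α)) * z' + 1 * y' * z' := by
    simp only [ha, QH2]; ring
  simp only [hQ, multiaffine_edge_biquadratic]
  subst ha
  simp only [QH2]
  ring
end

section
/- Inverse relation of successive Lax matrices for deformed H1: with M as above and the normalization L = M/√(k·f), the identity M(x₂,x₁;α;𝒴,𝒳)·M(x₁,x₂;α;𝒳,𝒴) = −k(α,λ)·f(x₁,x₂;α)·I₂ holds, where k(α,λ) = λ−α, f(x₁,x₂;α) = 1−ε(𝒴x₁²+𝒳x₂²), I₂ the 2×2 identity, and (𝒳,𝒴)∈{(0,1),(1,0)}. -/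
open Matrix

/-- The unnormalized Lax matrix M of deformed H1, with spectral parameter l,
lattice parameter a and coloring constants X, Y. -/
def LaxM (l ε x₁ x₂ a X Y : ℝ) : Matrix (Fin 2) (Fin 2) ℝ :=
  !![-x₂, -1; x₁ * x₂ - a + l, x₁] + (ε * (a - l)) • !![Y * x₁, 0; 0, -X * x₂]

theorem LaxM_eq_of (l ε x₁ x₂ a X Y : ℝ) :
    LaxM l ε x₁ x₂ a X Y
      = !![ε * (a - l) * Y * x₁ - x₂, -1; x₁ * x₂ - a + l, x₁ - ε * (a - l) * X * x₂] := by
  ext i j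
  fin_cases i <;> fin_cases j <;>
    simp only [LaxM, Matrix.add_apply, Matrix.smul_apply, smul_eq_mul, of_apply, cons_val',
      cons_val_zero, cons_val_one, cons_val_fin_one, Fin.isValue, Fin.zero_eta, Fin.mk_one] <;>
    ring

/-- The unnormalized form of `L_{n,m+1}(u₁,u₂) = −{L_{n,m}(u₂,u₁; −σ)}⁻¹`. -/
theorem LaxM_swap_eq_neg_adjugate (l ε x₁ x₂ a X Y : ℝ) :
    LaxM l ε x₂ x₁ a Y X = -adjugate (LaxM l ε x₁ x₂ a X Y) := by
  rw [LaxM_eq_of, LaxM_eq_of, adjugate_fin_two_of]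
  ext i j
  fin_cases i <;> fin_cases j <;> simp [mul_comm x₁ x₂]

theorem det_LaxM (l ε x₁ x₂ a X Y : ℝ) :
    (LaxM l ε x₁ x₂ a X Y).det
      = (l - a) * (1 - ε * (Y * x₁ ^ 2 + X * x₂ ^ 2)) - ε ^ 2 * (a - l) ^ 2 * (X * Y) * x₁ * x₂ := by
  rw [LaxM_eq_of, det_fin_two_of]
  ring

theorem det_LaxM_of_mul_eq_zero {l ε x₁ x₂ a X Y : ℝ} (hXY : X * Y = 0) :
    (LaxM l ε x₁ x₂ a X Y).det = (l - a) * (1 - ε * (Y * x₁ ^ 2 + X * x₂ ^ 2)) := by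
  rw [det_LaxM, hXY]
  ring

/-- Inverse relation of successive Lax matrices for deformed H1:
M(x₂,x₁;α;𝒴,𝒳)·M(x₁,x₂;α;𝒳,𝒴) = −k(α,λ)·f(x₁,x₂;α)·I₂,
where k(α,λ) = λ−α and f(x₁,x₂;α) = 1 − ε(𝒴x₁² + 𝒳x₂²). -/
theorem stmt16 (l ε x₁ x₂ α X Y : ℝ)
    (hXY : (X = 0 ∧ Y = 1) ∨ (X = 1 ∧ Y = 0)) :
    LaxM l ε x₂ x₁ α Y X * LaxM l ε x₁ x₂ α X Y
      = (-((l - α) * (1 - ε * (Y * x₁ ^ 2 + X * x₂ ^ 2)))) • (1 : Matrix (Fin 2) (Fin 2) ℝ) := by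
  have hXY_mul : X * Y = 0 := by
    rcases hXY with ⟨hX, -⟩ | ⟨-, hY⟩
    · rw [hX, zero_mul]
    · rw [hY, mul_zero]
  rw [LaxM_swap_eq_neg_adjugate, neg_mul, adjugate_mul, det_LaxM_of_mul_eq_zero hXY_mul, neg_smul]
end
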